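/- Let d ≥ 1 and let G be a finite subgroup of the unitary group U(d) of d×d complex unitary matrices, acting irreducibly on ℂ^d (i.e., the only subspaces of ℂ^d invariant under every U ∈ G are {0} and ℂ^d). Then (d/|G|)·Σ_{U∈G} |vec U⟩⟨vec U| = I on ℂ^d ⊗ ℂ^d, where vec U := Σ_{k,l} U_{k,l}·(e_k ⊗ e_l). Equivalently, the family {(d²/|G|)·|(1/√d)·vec U⟩⟨(1/√d)·vec U|}_{U∈G} is a POVM (its elements are positive semidefinite and sum to the identity). -/

import Mathlib

/-!
The twirl `A ↦ ∑_{U ∈ G} U A U*` commutes with every element of `G`, so each of its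
eigenspaces is `G`-invariant; by irreducibility the twirl is a scalar, namely `(|G|/d) tr A`
by comparing traces. For `A = E_{ln}` its `(k, m)` entry is
`∑_U U_{kl} conj U_{mn} = (|G|/d) δ_{ln} δ_{km}`, the `((k, l), (m, n))` entry of the identity.
-/

open scoped BigOperators ComplexInnerProductSpace
open Matrix MeasureTheory

noncomputable section

/-- `ℂ^d` with the standard Hermitian inner product. -/
abbrev V (d : ℕ) : Type := EuclideanSpace ℂ (Fin d)

/-- `ℂ^d ⊗ ℂ^d`, identified with functions on `Fin d × Fin d`. -/
abbrev V2 (d : ℕ) : Type := EuclideanSpace ℂ (Fin d × Fin d)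

/-- operators on `ℂ^d ⊗ ℂ^d`, as matrices. -/
abbrev Op2 (d : ℕ) : Type := Matrix (Fin d × Fin d) (Fin d × Fin d) ℂ

/-- tensor (Kronecker) product of vectors. -/
def tens {d : ℕ} (u v : V d) : V2 d := WithLp.toLp 2 fun p => u p.1 * v p.2

/-- entrywise complex conjugate `ū` of a vector. -/
def cvec {d : ℕ} (u : V d) : V d := WithLp.toLp 2 fun k => starRingEnd ℂ (u k)

/-- the maximally entangled state `φ⁰ = (1/√d) Σ_k e_k ⊗ e_k`. -/
def phi0 (d : ℕ) : V2 d := WithLp.toLp 2 fun p => if p.1 = p.2 then ((Real.sqrt d : ℂ))⁻¹ else 0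

/-- the rank-one operator `|w⟩⟨w|`. -/
def outer {d : ℕ} (w : V2 d) : Op2 d := Matrix.of fun p q => w p * starRingEnd ℂ (w q)

/-- `T_inv = |φ⁰⟩⟨φ⁰| + (1/(d+1))(I - |φ⁰⟩⟨φ⁰|)`. -/
def Tinv (d : ℕ) : Op2 d := outer (phi0 d) + (1 / ((d : ℂ) + 1)) • (1 - outer (phi0 d))


/-- `vec U = Σ_{k,l} U_{k,l} e_k ⊗ e_l`. -/
def vecM {d : ℕ} (U : Matrix (Fin d) (Fin d) ℂ) : V2 d := WithLp.toLp 2 fun p => U p.1 p.2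

namespace Module.End

variable {K M : Type*} [Field K] [IsAlgClosed K] [AddCommGroup M] [Module K M]
  [FiniteDimensional K M] [Nontrivial M]

theorem exists_eq_smul_one_of_forall_commute (S : Set (Module.End K M))
    (hS : ∀ W : Submodule K M, (∀ g ∈ S, ∀ w ∈ W, g w ∈ W) → W = ⊥ ∨ W = ⊤)
    {f : Module.End K M} (hf : ∀ g ∈ S, Commute g f) : ∃ c : K, f = c • 1 := by
  obtain ⟨c, hc⟩ := f.exists_eigenvalue
  have hinv : ∀ g ∈ S, ∀ w ∈ f.eigenspace c, g w ∈ f.eigenspace c := by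
    intro g hg w hw
    rw [mem_eigenspace_iff] at hw ⊢
    rw [← mul_apply, ← (hf g hg).eq, mul_apply, hw, map_smul]
  have htop : f.eigenspace c = ⊤ := (hS _ hinv).resolve_left (hasEigenvalue_iff.mp hc)
  refine ⟨c, LinearMap.ext fun w => ?_⟩
  exact mem_eigenspace_iff.mp (htop ▸ Submodule.mem_top)

end Module.End

namespace Matrix

variable {n : Type*} [Fintype n] [DecidableEq n]

theorem exists_eq_smul_one_of_forall_commute [Nonempty n] (S : Set (Matrix n n ℂ))
    (hS : ∀ W : Submodule ℂ (EuclideanSpace ℂ n),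
      (∀ A ∈ S, ∀ w ∈ W, WithLp.toLp 2 (A.mulVec w) ∈ W) → W = ⊥ ∨ W = ⊤)
    {T : Matrix n n ℂ} (hT : ∀ A ∈ S, Commute A T) : ∃ c : ℂ, T = c • 1 := by
  let e := toEuclideanCLM (n := n) (𝕜 := ℂ)
  obtain ⟨c, hc⟩ := Module.End.exists_eq_smul_one_of_forall_commute
    ((fun A => (e A : Module.End ℂ (EuclideanSpace ℂ n))) '' S)
    (fun W hW => hS W fun A hA => hW _ ⟨A, hA, rfl⟩)
    (f := e T) (by
      rintro _ ⟨A, hA, rfl⟩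
      exact congrArg ContinuousLinearMap.toLinearMap ((hT A hA).map e).eq)
  refine ⟨c, EquivLike.injective e (ContinuousLinearMap.coe_injective ?_)⟩
  rw [map_smul e, map_one e, ContinuousLinearMap.toLinearMap_smul,
    ContinuousLinearMap.toLinearMap_one]
  exact hc

theorem mul_single_mul_star_apply {α : Type*} [CommSemiring α] [StarRing α]
    (U : Matrix n n α) (i j k l : n) :
    (U * single i j (1 : α) * star U : Matrix n n α) k l = U k i * starRingEnd α (U l j) := by
  simp [mul_apply, single_apply, ite_and, starRingEnd_apply]

section Twirl

variable {α : Type*} [CommRing α] [StarRing α] (G : Subgroup (unitaryGroup n α)) [Fintype G]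

def twirl (A : Matrix n n α) : Matrix n n α :=
  ∑ U : G, (U : Matrix n n α) * A * star (U : Matrix n n α)

variable {G}

theorem commute_twirl {U₀ : unitaryGroup n α} (hU₀ : U₀ ∈ G) (A : Matrix n n α) :
    Commute (U₀ : Matrix n n α) (twirl G A) := by
  have hU₀' : star (U₀ : Matrix n n α) * U₀ = 1 := UnitaryGroup.star_mul_self U₀
  unfold Commute SemiconjBy twirl
  rw [Finset.mul_sum, Finset.sum_mul]
  conv_rhs => rw [← Equiv.sum_comp (Equiv.mulLeft (⟨U₀, hU₀⟩ : G))]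
  refine Finset.sum_congr rfl fun U _ => ?_
  simp only [Equiv.coe_mulLeft, Subgroup.coe_mul, UnitaryGroup.mul_val, star_mul, mul_assoc,
    hU₀', mul_one]

variable (G)

theorem trace_twirl (A : Matrix n n α) : (twirl G A).trace = Fintype.card G • A.trace := by
  simp only [twirl, trace_sum, trace_mul_cycle, UnitaryGroup.star_mul_self, one_mul,
    Finset.sum_const, Finset.card_univ]

end Twirl

theorem twirl_eq_smul_one [Nonempty n] (G : Subgroup (unitaryGroup n ℂ)) [Fintype G]
    (hG : ∀ W : Submodule ℂ (EuclideanSpace ℂ n),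
      (∀ U ∈ G, ∀ w ∈ W, WithLp.toLp 2 ((U : Matrix n n ℂ).mulVec w) ∈ W) → W = ⊥ ∨ W = ⊤)
    (A : Matrix n n ℂ) :
    twirl G A = ((Fintype.card G : ℂ) / Fintype.card n * A.trace) • 1 := by
  obtain ⟨c, hc⟩ := exists_eq_smul_one_of_forall_commute ((↑) '' (G : Set (unitaryGroup n ℂ)))
    (fun W hW => hG W fun U hU => hW U ⟨U, hU, rfl⟩)
    (T := twirl G A) (by rintro _ ⟨U, hU, rfl⟩; exact commute_twirl hU A)
  have htrace := trace_twirl G A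
  rw [hc, trace_smul, trace_one, smul_eq_mul, nsmul_eq_mul] at htrace
  have hn : (Fintype.card n : ℂ) ≠ 0 := Nat.cast_ne_zero.mpr Fintype.card_ne_zero
  rw [hc, div_mul_eq_mul_div, ← htrace, mul_div_cancel_right₀ _ hn]

end Matrix

/-- For a finite subgroup `G` of the unitary group acting irreducibly on `ℂ^d`,
`(d/|G|) Σ_{U∈G} |vec U⟩⟨vec U| = I`, i.e. the rescaled family is a POVM. -/
theorem stmt12 (d : ℕ) (hd : 1 ≤ d) (G : Subgroup (Matrix.unitaryGroup (Fin d) ℂ))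
    [Fintype G]
    (hirr : ∀ W : Submodule ℂ (V d),
      (∀ U ∈ G, ∀ w ∈ W,
        WithLp.toLp 2 (((U : Matrix.unitaryGroup (Fin d) ℂ) : Matrix (Fin d) (Fin d) ℂ).mulVec w) ∈ W) →
      W = ⊥ ∨ W = ⊤) :
    ((d : ℂ) / (Fintype.card G : ℂ)) •
        ∑ U : G, outer (vecM ((U : Matrix.unitaryGroup (Fin d) ℂ) : Matrix (Fin d) (Fin d) ℂ))
      = (1 : Op2 d) := by
  have : Nonempty (Fin d) := ⟨⟨0, hd⟩⟩
  ext ⟨k, l⟩ ⟨m, n⟩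
  have hentry := congr_fun₂ (twirl_eq_smul_one G hirr (single l n 1)) k m
  simp only [twirl, Matrix.sum_apply, mul_single_mul_star_apply] at hentry
  simp only [Matrix.smul_apply, Matrix.sum_apply, outer, vecM, of_apply, hentry, Fintype.card_fin]
  rcases eq_or_ne l n with rfl | hln
  · have hG : (Fintype.card G : ℂ) ≠ 0 := Nat.cast_ne_zero.mpr Fintype.card_ne_zero
    have hd0 : (d : ℂ) ≠ 0 := Nat.cast_ne_zero.mpr (by omega)
    by_cases hkm : k = m <;> simp [trace_single_eq_same, one_apply, hkm, hG, hd0]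
  · simp [trace_single_eq_of_ne _ _ _ hln, one_apply, hln]
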